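/- arXiv:2303.17931 — 3 statements merged into one kernel-verified Lean document; each statement's English description precedes it below -/
import Mathlib

section
/- Under Foata's fundamental transformation mapping π to σ, a non-minimal fixed point of π (a fixed point i with i ≠ 1) corresponds to a pair of consecutive positions in σ that are both left-to-right minima; and the fixed point 1 (if present) corresponds to σ ending in the value 1 at its last position. -/
/-!
The word `foataWord π` is the concatenation of the cycles of `π`, each read from its minimum,
with the minima decreasing. Hence every cycle minimum is smaller than every letter written
before it, i.e. it is a left-to-right minimum. A fixed point `i` is a one-letter cycle; when
`i ≠ 0` it is followed by the cycle of a smaller minimum (there is one: the cycle of `0`),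
whose first letter is again a left-to-right minimum. When `0` is fixed, its cycle comes last.
-/

open Classical in
/-- The one-line word of Foata's fundamental transformation: write each cycle of `π`
with its smallest element first, sort the cycles in descending order of their first
elements, and erase the parentheses. -/
noncomputable def foataWord {n : ℕ} (π : Equiv.Perm (Fin n)) : List (Fin n) :=
  (((List.finRange n).filter (fun m => decide (∀ k : ℕ, m ≤ (π ^ k) m))).reverse).flatMap
    (fun m => (List.range (Function.minimalPeriod (⇑π) m)).map (fun k => (π ^ k) m))

/-- Foata's fundamental transformation as a map on permutations. -/
noncomputable def foataPerm {n : ℕ} (π : Equiv.Perm (Fin n)) : Equiv.Perm (Fin n) :=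
  if h : ∃ σ : Equiv.Perm (Fin n), List.ofFn ⇑σ = foataWord π then h.choose else 1

theorem List.exists_eq_append_cons_of_pairwise_gt {α : Type*} [LinearOrder α] {L : List α}
    (hL : L.Pairwise (· > ·)) {m : α} (hm : m ∈ L) :
    ∃ A C, L = A ++ m :: C ∧ (∀ a ∈ A, m < a) ∧ ∀ c, c ∈ C ↔ c ∈ L ∧ c < m := by
  obtain ⟨A, C, rfl⟩ := List.append_of_mem hm
  rw [List.pairwise_append, List.pairwise_cons] at hL
  obtain ⟨-, ⟨hmC, -⟩, hAm⟩ := hL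
  have hAm : ∀ a ∈ A, m < a := fun a ha => hAm a ha m List.mem_cons_self
  refine ⟨A, C, rfl, hAm, fun c => ⟨fun hc => ⟨by simp [hc], hmC c hc⟩, fun ⟨hc, hcm⟩ => ?_⟩⟩
  simp only [List.mem_append, List.mem_cons] at hc
  rcases hc with hc | rfl | hc
  · exact absurd (hAm c hc) hcm.not_gt
  · exact absurd hcm (lt_irrefl c)
  · exact hc

theorem List.exists_apply_eq_of_ofFn_eq_append {α : Type*} {n : ℕ} {f : Fin n → α}
    {P Q : List α} {x : α} (h : List.ofFn f = P ++ x :: Q) :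
    ∃ j : Fin n, (j : ℕ) = P.length ∧ f j = x ∧ ∀ l < j, f l ∈ P := by
  have hlen : n = P.length + (Q.length + 1) := by simpa using congrArg List.length h
  refine ⟨⟨P.length, by omega⟩, rfl, ?_, fun l hl => ?_⟩
  · have := List.getElem_of_eq h (i := P.length) (by simp; omega)
    rw [List.getElem_ofFn, List.getElem_append_right le_rfl] at this
    simpa using this
  · have hl : (l : ℕ) < P.length := hl
    have := List.getElem_of_eq h (i := l) (by simp)
    rw [List.getElem_ofFn, List.getElem_append_left hl] at this
    exact this ▸ List.getElem_mem hl

theorem List.Nodup.exists_perm_ofFn_eq {n : ℕ} {l : List (Fin n)} (hl : l.Nodup)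
    (hmem : ∀ x, x ∈ l) : ∃ σ : Equiv.Perm (Fin n), List.ofFn σ = l := by
  have hlen : l.length = n := by
    simpa using Fintype.card_congr (hl.getEquivOfForallMemList l hmem)
  exact ⟨(finCongr hlen.symm).trans (hl.getEquivOfForallMemList l hmem),
    (List.ofFn_congr hlen l.get).symm.trans (List.ofFn_get l)⟩

theorem Equiv.Perm.sameCycle_iff_exists_nat_pow_eq {α : Type*} [Finite α] {f : Equiv.Perm α}
    {x y : α} : f.SameCycle x y ↔ ∃ k : ℕ, (f ^ k) x = y :=
  ⟨SameCycle.exists_nat_pow_eq, fun ⟨k, hk⟩ => ⟨k, by simpa using hk⟩⟩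

namespace Foata

variable {n : ℕ} (π : Equiv.Perm (Fin n))

open Classical in
noncomputable def cycleMins : List (Fin n) :=
  (List.finRange n).filter (fun m => decide (∀ k : ℕ, m ≤ (π ^ k) m))

noncomputable def cycleBlock (m : Fin n) : List (Fin n) :=
  (List.range (Function.minimalPeriod π m)).map (fun k => (π ^ k) m)

theorem foataWord_eq_flatMap : foataWord π = (cycleMins π).reverse.flatMap (cycleBlock π) :=
  rfl

variable {π}

theorem mem_cycleMins {m : Fin n} : m ∈ cycleMins π ↔ ∀ x, π.SameCycle m x → m ≤ x := by
  simp [cycleMins, Equiv.Perm.sameCycle_iff_exists_nat_pow_eq]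

theorem pairwise_gt_reverse_cycleMins : (cycleMins π).reverse.Pairwise (· > ·) :=
  List.pairwise_reverse.2 ((List.pairwise_lt_finRange n).filter _)

theorem coe_cycleBlock (m : Fin n) :
    (cycleBlock π m : Cycle (Fin n)) = Function.periodicOrbit π m := by
  simp [cycleBlock, Function.periodicOrbit_def, Equiv.Perm.coe_pow]

theorem mem_cycleBlock {m x : Fin n} : x ∈ cycleBlock π m ↔ π.SameCycle m x := by
  rw [← Cycle.mem_coe_iff, coe_cycleBlock,
    Function.mem_periodicOrbit_iff (π.injective.mem_periodicPts m),
    Equiv.Perm.sameCycle_iff_exists_nat_pow_eq]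
  simp [Equiv.Perm.coe_pow]

theorem nodup_cycleBlock (m : Fin n) : (cycleBlock π m).Nodup := by
  rw [← Cycle.nodup_coe_iff, coe_cycleBlock]
  exact Function.nodup_periodicOrbit

theorem exists_cycleBlock_eq_cons (m : Fin n) : ∃ t, cycleBlock π m = m :: t := by
  obtain ⟨p, hp⟩ := Nat.exists_eq_succ_of_ne_zero
    (Function.minimalPeriod_pos_of_mem_periodicPts (π.injective.mem_periodicPts m)).ne'
  rw [cycleBlock, hp, List.range_succ_eq_map, List.map_cons, pow_zero]
  exact ⟨_, rfl⟩

theorem cycleBlock_of_isFixedPt {i : Fin n} (hi : π i = i) : cycleBlock π i = [i] := by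
  simp [cycleBlock, Function.minimalPeriod_eq_one_iff_isFixedPt.2 hi]

theorem le_of_mem_cycleBlock {m x : Fin n} (hm : m ∈ cycleMins π) (hx : x ∈ cycleBlock π m) :
    m ≤ x :=
  mem_cycleMins.1 hm x (mem_cycleBlock.1 hx)

theorem mem_cycleMins_of_isFixedPt {i : Fin n} (hi : π i = i) : i ∈ cycleMins π :=
  mem_cycleMins.2 fun _ h => (h.eq_of_left hi).le

theorem exists_mem_cycleMins_sameCycle (x : Fin n) : ∃ m ∈ cycleMins π, π.SameCycle m x := by
  classical
  obtain ⟨m, hm, hmin⟩ := Finset.exists_min_image {y | π.SameCycle y x} id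
    ⟨x, by simp [Equiv.Perm.SameCycle.refl]⟩
  simp only [Finset.mem_filter, Finset.mem_univ, true_and, id] at hm hmin
  exact ⟨m, mem_cycleMins.2 fun y hy => hmin y (hy.symm.trans hm), hm⟩

theorem nodup_foataWord : (foataWord π).Nodup := by
  rw [foataWord_eq_flatMap, List.nodup_flatMap]
  refine ⟨fun m _ => nodup_cycleBlock m, pairwise_gt_reverse_cycleMins.imp_of_mem ?_⟩
  intro a b ha hb hab x hxa hxb
  have hab' : π.SameCycle a b := (mem_cycleBlock.1 hxa).trans (mem_cycleBlock.1 hxb).symm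
  rw [List.mem_reverse] at ha hb
  exact (mem_cycleMins.1 ha b hab').not_gt hab

theorem mem_foataWord (x : Fin n) : x ∈ foataWord π := by
  obtain ⟨m, hm, hmx⟩ := exists_mem_cycleMins_sameCycle x
  rw [foataWord_eq_flatMap, List.mem_flatMap]
  exact ⟨m, List.mem_reverse.2 hm, mem_cycleBlock.2 hmx⟩

theorem ofFn_foataPerm : List.ofFn (foataPerm π) = foataWord π := by
  have h := (nodup_foataWord (π := π)).exists_perm_ofFn_eq mem_foataWord
  rw [foataPerm, dif_pos h]
  exact h.choose_spec

theorem foataWord_eq_append_cycleBlock {m : Fin n} (hm : m ∈ cycleMins π) :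
    ∃ (P C : List (Fin n)), foataWord π = P ++ cycleBlock π m ++ C.flatMap (cycleBlock π) ∧
      (∀ x ∈ P, m < x) ∧ ∀ c, c ∈ C ↔ c ∈ cycleMins π ∧ c < m := by
  obtain ⟨A, C, hAC, hA, hC⟩ :=
    List.exists_eq_append_cons_of_pairwise_gt pairwise_gt_reverse_cycleMins
      (List.mem_reverse.2 hm)
  refine ⟨A.flatMap (cycleBlock π), C, ?_, fun x hx => ?_, by simpa using hC⟩
  · rw [foataWord_eq_flatMap, hAC, List.flatMap_append, List.flatMap_cons, List.append_assoc]
  · obtain ⟨a, ha, hxa⟩ := List.mem_flatMap.1 hx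
    have ha' : a ∈ (cycleMins π).reverse := by simp [hAC, ha]
    exact (hA a ha).trans_le (le_of_mem_cycleBlock (List.mem_reverse.1 ha') hxa)

theorem foataWord_eq_append_of_isFixedPt {i : Fin n} (hi : π i = i) :
    ∃ (P C : List (Fin n)), foataWord π = P ++ i :: C.flatMap (cycleBlock π) ∧
      (∀ x ∈ P, i < x) ∧ ∀ c, c ∈ C ↔ c ∈ cycleMins π ∧ c < i := by
  obtain ⟨P, C, h, hP, hC⟩ := foataWord_eq_append_cycleBlock (mem_cycleMins_of_isFixedPt hi)
  exact ⟨P, C, by rw [h, cycleBlock_of_isFixedPt hi]; simp, hP, hC⟩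

end Foata

open Foata in
/-- Under Foata's fundamental transformation `π ↦ σ`, a non-minimal fixed point `i` of
`π` corresponds to a pair of consecutive left-to-right minima of `σ` (the first one
carrying the value `i`), and the minimal fixed point (if present) corresponds to `σ`
ending with the minimal value. -/
theorem foata_fixed_points_correspondence {n : ℕ} (π σ : Equiv.Perm (Fin n))
    (h : σ = foataPerm π) :
    (∀ i : Fin n, π i = i → 0 < (i : ℕ) →
        ∃ j j' : Fin n, σ j = i ∧ (j' : ℕ) = (j : ℕ) + 1 ∧
          (∀ l, l < j → σ j < σ l) ∧ (∀ l, l < j' → σ j' < σ l)) ∧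
    ((∃ i : Fin n, (i : ℕ) = 0 ∧ π i = i) →
        ∃ j : Fin n, (j : ℕ) = n - 1 ∧ (σ j : ℕ) = 0) := by
  subst h
  have hσ := ofFn_foataPerm (π := π)
  refine ⟨fun i hi hpos => ?_, fun ⟨i, hi0, hi⟩ => ?_⟩
  · obtain ⟨P, C, hPC, hP, hC⟩ := foataWord_eq_append_of_isFixedPt hi
    have h0 : (⟨0, i.pos⟩ : Fin n) ∈ C :=
      (hC _).2 ⟨mem_cycleMins.2 fun _ _ => Nat.zero_le _, hpos⟩
    obtain ⟨c, C', rfl⟩ := List.exists_cons_of_ne_nil (List.ne_nil_of_mem h0)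
    obtain ⟨t, ht⟩ := exists_cycleBlock_eq_cons (π := π) c
    have hci : c < i := ((hC c).1 List.mem_cons_self).2
    rw [hPC, List.flatMap_cons, ht, List.cons_append] at hσ
    obtain ⟨j, hj, hσj, hj_min⟩ := List.exists_apply_eq_of_ofFn_eq_append hσ
    obtain ⟨j', hj', hσj', hj'_min⟩ :=
      List.exists_apply_eq_of_ofFn_eq_append (P := P ++ [i]) (by simpa using hσ)
    refine ⟨j, j', hσj, by simp [hj, hj'], fun l hl => hσj ▸ hP _ (hj_min l hl), fun l hl => ?_⟩
    rcases List.mem_append.1 (hj'_min l hl) with h | h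
    · exact hσj' ▸ hci.trans (hP _ h)
    · exact hσj' ▸ List.mem_singleton.1 h ▸ hci
  · obtain ⟨P, C, hPC, -, hC⟩ := foataWord_eq_append_of_isFixedPt hi
    have hC : C = [] := List.eq_nil_iff_forall_not_mem.2 fun c hc =>
      Nat.not_lt_zero c (hi0 ▸ Fin.lt_def.1 ((hC c).1 hc).2)
    rw [hPC, hC] at hσ
    obtain ⟨j, hj, hσj, -⟩ := List.exists_apply_eq_of_ofFn_eq_append hσ
    have hn : n = P.length + 1 := by simpa using congrArg List.length hσ
    exact ⟨j, by omega, by rw [hσj, hi0]⟩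
end

section
/- A permutation σ of {1,...,n} avoids the mesh pattern p (points (1,1),(2,3),(3,2); shaded cells (0,2),(0,3),(1,2),(1,3),(2,0),(2,1),(2,2),(2,3),(3,1),(3,2)) if and only if it avoids the mesh pattern s_2' (same points; shaded cells (0,1),(0,2),(0,3),(1,1),(1,2),(1,3),(2,0),(2,1),(2,2),(2,3),(3,1),(3,2)); that is, S_n(p) = S_n(s_2') for all n. -/
/-- `l` lies in the region of cell `(a, b)` for an occurrence of a mesh pattern with
underlying classical pattern `132` at positions `i₁ < i₂ < i₃` in `σ`
(rows determined by the sorted values `σ i₁ < σ i₃ < σ i₂`). -/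
def InReg132 {n : ℕ} (σ : Equiv.Perm (Fin n)) (i1 i2 i3 : Fin n) (a b : ℕ) (l : Fin n) :
    Prop :=
  ((a = 0 ∧ l < i1) ∨ (a = 1 ∧ i1 < l ∧ l < i2) ∨ (a = 2 ∧ i2 < l ∧ l < i3) ∨
      (a = 3 ∧ i3 < l)) ∧
  ((b = 0 ∧ σ l < σ i1) ∨ (b = 1 ∧ σ i1 < σ l ∧ σ l < σ i3) ∨
      (b = 2 ∧ σ i3 < σ l ∧ σ l < σ i2) ∨ (b = 3 ∧ σ i2 < σ l))

/-- Occurrence of the mesh pattern with underlying pattern `132` and shaded cells `R`. -/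
def Occ132 {n : ℕ} (R : List (ℕ × ℕ)) (σ : Equiv.Perm (Fin n)) (i1 i2 i3 : Fin n) : Prop :=
  i1 < i2 ∧ i2 < i3 ∧ σ i1 < σ i3 ∧ σ i3 < σ i2 ∧
    ∀ c ∈ R, ∀ l : Fin n, ¬ InReg132 σ i1 i2 i3 c.1 c.2 l

/-- Avoidance of a mesh pattern with underlying classical pattern `132`. -/
def Avoid132 {n : ℕ} (R : List (ℕ × ℕ)) (σ : Equiv.Perm (Fin n)) : Prop :=
  ¬ ∃ i1 i2 i3 : Fin n, Occ132 R σ i1 i2 i3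

/-- The shaded cells of the mesh pattern `p`. -/
def cellsP : List (ℕ × ℕ) :=
  [(0,2),(0,3),(1,2),(1,3),(2,0),(2,1),(2,2),(2,3),(3,1),(3,2)]

/-- The shaded cells of the mesh pattern `s₂'`. -/
def cellsS2' : List (ℕ × ℕ) :=
  [(0,1),(0,2),(0,3),(1,1),(1,2),(1,3),(2,0),(2,1),(2,2),(2,3),(3,1),(3,2)]

lemma occ_p_of_occ_s2' {n : ℕ} {σ : Equiv.Perm (Fin n)} {i1 i2 i3 : Fin n}
    (h : Occ132 cellsS2' σ i1 i2 i3) : Occ132 cellsP σ i1 i2 i3 := by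
  obtain ⟨h1, h2, h3, h4, hc⟩ := h
  refine ⟨h1, h2, h3, h4, fun c hcm l => hc c ?_ l⟩
  simp only [cellsP, cellsS2', List.mem_cons, List.mem_singleton] at hcm ⊢
  tauto

lemma exists_occ_s2' {n : ℕ} {σ : Equiv.Perm (Fin n)} {i1 i2 i3 : Fin n}
    (h : Occ132 cellsP σ i1 i2 i3) : ∃ j1, Occ132 cellsS2' σ j1 i2 i3 := by
  obtain ⟨h1, h2, h3, h4, hc⟩ := h
  have inj := σ.injective
  -- Fact A : everything left of i2 has value below σ i3
  have hA : ∀ l : Fin n, l < i2 → σ l < σ i3 := by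
    intro l hl
    rcases lt_trichotomy (σ l) (σ i3) with h' | h' | h'
    · exact h'
    · exfalso
      have e := inj h'
      rw [e] at hl
      exact absurd hl (asymm h2)
    · exfalso
      have hl2 : σ l < σ i2 ∨ σ i2 < σ l := by
        rcases lt_trichotomy (σ l) (σ i2) with h'' | h'' | h''
        · exact Or.inl h''
        · exfalso
          have e := inj h''
          rw [e] at hl
          exact absurd hl (lt_irrefl _)
        · exact Or.inr h''
      have ha : l < i1 ∨ (i1 < l ∧ l < i2) := by
        rcases lt_trichotomy l i1 with h'' | h'' | h''
        · exact Or.inl h''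
        · exfalso
          rw [h''] at h'
          exact absurd h' (asymm h3)
        · exact Or.inr ⟨h'', hl⟩
      rcases ha with ha | ha
      · rcases hl2 with hb | hb
        · exact hc (0,2) (by simp [cellsP]) l
            ⟨Or.inl ⟨rfl, ha⟩, Or.inr (Or.inr (Or.inl ⟨rfl, h', hb⟩))⟩
        · exact hc (0,3) (by simp [cellsP]) l
            ⟨Or.inl ⟨rfl, ha⟩, Or.inr (Or.inr (Or.inr ⟨rfl, hb⟩))⟩
      · rcases hl2 with hb | hb
        · exact hc (1,2) (by simp [cellsP]) l
            ⟨Or.inr (Or.inl ⟨rfl, ha⟩), Or.inr (Or.inr (Or.inl ⟨rfl, h', hb⟩))⟩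
        · exact hc (1,3) (by simp [cellsP]) l
            ⟨Or.inr (Or.inl ⟨rfl, ha⟩), Or.inr (Or.inr (Or.inr ⟨rfl, hb⟩))⟩
  -- Fact B : nothing strictly between i2 and i3
  have hB : ∀ l : Fin n, ¬ (i2 < l ∧ l < i3) := by
    rintro l ⟨ha1, ha2⟩
    have hx : (2 : ℕ) = 0 ∧ l < i1 ∨ (2 : ℕ) = 1 ∧ i1 < l ∧ l < i2 ∨
        (2 : ℕ) = 2 ∧ i2 < l ∧ l < i3 ∨ (2 : ℕ) = 3 ∧ i3 < l :=
      Or.inr (Or.inr (Or.inl ⟨rfl, ha1, ha2⟩))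
    rcases lt_trichotomy (σ l) (σ i1) with hb | hb | hb
    · exact hc (2,0) (by simp [cellsP]) l ⟨hx, Or.inl ⟨rfl, hb⟩⟩
    · have e := inj hb
      rw [e] at ha1
      exact absurd (h1.trans ha1) (lt_irrefl _)
    · rcases lt_trichotomy (σ l) (σ i3) with hb' | hb' | hb'
      · exact hc (2,1) (by simp [cellsP]) l ⟨hx, Or.inr (Or.inl ⟨rfl, hb, hb'⟩)⟩
      · have e := inj hb'
        rw [e] at ha2
        exact absurd ha2 (lt_irrefl _)
      · rcases lt_trichotomy (σ l) (σ i2) with hb'' | hb'' | hb''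
        · exact hc (2,2) (by simp [cellsP]) l ⟨hx, Or.inr (Or.inr (Or.inl ⟨rfl, hb', hb''⟩))⟩
        · have e := inj hb''
          rw [e] at ha1
          exact absurd ha1 (lt_irrefl _)
        · exact hc (2,3) (by simp [cellsP]) l ⟨hx, Or.inr (Or.inr (Or.inr ⟨rfl, hb''⟩))⟩
  -- Fact C : nothing right of i3 with value between σ i1 and σ i2
  have hC : ∀ l : Fin n, i3 < l → σ i1 < σ l → σ l < σ i2 → False := by
    intro l ha hb1 hb2
    rcases lt_trichotomy (σ l) (σ i3) with hb | hb | hb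
    · exact hc (3,1) (by simp [cellsP]) l
        ⟨Or.inr (Or.inr (Or.inr ⟨rfl, ha⟩)), Or.inr (Or.inl ⟨rfl, hb1, hb⟩)⟩
    · have e := inj hb
      rw [e] at ha
      exact absurd ha (lt_irrefl _)
    · exact hc (3,2) (by simp [cellsP]) l
        ⟨Or.inr (Or.inr (Or.inr ⟨rfl, ha⟩)), Or.inr (Or.inr (Or.inl ⟨rfl, hb, hb2⟩))⟩
  -- choose j1 with maximal value among positions left of i2
  obtain ⟨j1, hj1mem, hj1max⟩ :=
    (Finset.filter (fun l => l < i2) Finset.univ).exists_max_image (fun l => σ l)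
      ⟨i1, by simp [h1]⟩
  simp only [Finset.mem_filter, Finset.mem_univ, true_and] at hj1mem
  have hj1max' : ∀ l : Fin n, l < i2 → σ l ≤ σ j1 := fun l hl =>
    hj1max l (by simp [hl])
  have hmax2 : ∀ l : Fin n, l < i2 → σ j1 < σ l → False := fun l hl hlt =>
    absurd (hj1max' l hl) (not_le.2 hlt)
  have hi1j : σ i1 ≤ σ j1 := hj1max' i1 h1
  have hj3 : σ j1 < σ i3 := hA j1 hj1mem
  refine ⟨j1, hj1mem, h2, hj3, h4, ?_⟩
  rintro ⟨a, b⟩ hcm l ⟨hx, hy⟩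
  rcases hx with ⟨ha, hp⟩ | ⟨ha, hp⟩ | ⟨ha, hp⟩ | ⟨ha, hp⟩ <;>
    rcases hy with ⟨hb, hq⟩ | ⟨hb, hq⟩ | ⟨hb, hq⟩ | ⟨hb, hq⟩ <;>
      subst ha <;> subst hb <;>
        first
            | exact absurd hcm (by decide)
            | exact hmax2 l (hp.trans hj1mem) hq.1
            | exact hmax2 l (hp.trans hj1mem) (hj3.trans hq.1)
            | exact hmax2 l (hp.trans hj1mem) ((hj3.trans h4).trans hq)
            | exact hmax2 l hp.2 hq.1
            | exact hmax2 l hp.2 (hj3.trans hq.1)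
            | exact hmax2 l hp.2 ((hj3.trans h4).trans hq)
            | exact hB l hp
            | exact hC l hp (lt_of_le_of_lt hi1j hq.1) (hq.2.trans h4)
            | exact hC l hp (h3.trans hq.1) hq.2

/-- A permutation avoids the mesh pattern `p` if and only if it avoids the mesh
pattern `s₂'`. -/
theorem avoid_p_iff_avoid_s2' {n : ℕ} (σ : Equiv.Perm (Fin n)) :
    Avoid132 cellsP σ ↔ Avoid132 cellsS2' σ := by
  constructor
  · rintro h ⟨i1, i2, i3, occ⟩
    exact h ⟨i1, i2, i3, occ_p_of_occ_s2' occ⟩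
  · rintro h ⟨i1, i2, i3, occ⟩
    obtain ⟨j1, occ'⟩ := exists_occ_s2' occ
    exact h ⟨j1, i2, i3, occ'⟩
end

section
/- If F(x) = \sum_{n≥0} c_n x^n is a formal power series over ℚ satisfying x^2(1+x^2)F'(x) - (1+x^2)(1-x-x^2)F(x) + 1 - x^2 = 0 with F(0)=1, then F is unique; i.e., the coefficients c_n are determined uniquely by this differential equation and initial condition. -/
/-!
The difference `D = F - G` solves the homogeneous equation, and since
`(1 + X²)(1 - X - X²) = 1 - X(1 + X² + X³)` this can be rewritten as
`D = X * ((1 + X²) * (X D') + (1 + X² + X³) * D)`.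
The operator `X * d/dX` does not lower the `X`-adic order, so the right-hand side has strictly
larger order than `D`; hence `X ^ n ∣ D` for every `n`, i.e. `D = 0`.
-/

open PowerSeries

namespace PowerSeries

variable {R : Type*} [CommRing R]

theorem X_pow_dvd_X_mul_derivative {n : ℕ} {f : R⟦X⟧} (hf : X ^ n ∣ f) :
    X ^ n ∣ X * d⁄dX R f := by
  rw [X_pow_dvd_iff] at hf ⊢
  rintro (_ | m) hm
  · simp
  · rw [coeff_succ_X_mul, coeff_derivative, hf (m + 1) hm, zero_mul]

theorem eq_zero_of_forall_X_pow_dvd {f : R⟦X⟧} (hf : ∀ n, X ^ n ∣ f) : f = 0 := by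
  ext n
  exact X_pow_dvd_iff.mp (hf (n + 1)) n n.lt_succ_self

theorem eq_zero_of_eq_X_mul {f P Q : R⟦X⟧}
    (hf : f = X * (P * (X * d⁄dX R f) + Q * f)) : f = 0 := by
  refine eq_zero_of_forall_X_pow_dvd fun n => ?_
  induction n with
  | zero => exact one_dvd f
  | succ n ih =>
    rw [hf, pow_succ']
    exact mul_dvd_mul_left X <| dvd_add
      (dvd_mul_of_dvd_right (X_pow_dvd_X_mul_derivative ih) P) (dvd_mul_of_dvd_right ih Q)

end PowerSeries

theorem powerSeries_ODE_solution_unique_general (F G : PowerSeries ℚ)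
    (hF : X ^ 2 * (1 + X ^ 2) * (d⁄dX ℚ F) - (1 + X ^ 2) * (1 - X - X ^ 2) * F
        + 1 - X ^ 2 = 0)
    (hG : X ^ 2 * (1 + X ^ 2) * (d⁄dX ℚ G) - (1 + X ^ 2) * (1 - X - X ^ 2) * G
        + 1 - X ^ 2 = 0) :
    F = G := by
  rw [← sub_eq_zero]
  refine eq_zero_of_eq_X_mul (P := 1 + X ^ 2) (Q := 1 + X ^ 2 + X ^ 3) ?_
  rw [map_sub]
  linear_combination hG - hF

/-- The formal power series solution of
`x²(1+x²)F'(x) - (1+x²)(1-x-x²)F(x) + 1 - x² = 0`, `F(0) = 1`, is unique. -/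
theorem powerSeries_ODE_solution_unique (F G : PowerSeries ℚ)
    (hF : X ^ 2 * (1 + X ^ 2) * (d⁄dX ℚ F) - (1 + X ^ 2) * (1 - X - X ^ 2) * F
        + 1 - X ^ 2 = 0)
    (hF0 : PowerSeries.constantCoeff F = 1)
    (hG : X ^ 2 * (1 + X ^ 2) * (d⁄dX ℚ G) - (1 + X ^ 2) * (1 - X - X ^ 2) * G
        + 1 - X ^ 2 = 0)
    (hG0 : PowerSeries.constantCoeff G = 1) :
    F = G :=
  powerSeries_ODE_solution_unique_general F G hF hG
end
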